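/- arXiv:math/0702263 — 3 statements merged into one kernel-verified Lean document; each statement's English description precedes it below -/
import Mathlib

section
/- Let U:ℝ^m→ℝ be twice continuously differentiable, and let r∈ℝ^m, x∈ℝ^m and k̄>0. Then there exists ᾱ>0 (depending on x and k̄) such that for every 0<α≤ᾱ the function z ↦ R^α[U](z,r) is twice continuously differentiable on the open ball B(x,k̄); moreover, as α→0⁺, R^α[U](·,r), its gradient and its Hessian converge uniformly on B(x,k̄) to U, ∇U and D²U respectively. -/
open scoped RealInnerProductSpace
open Filter Metric MeasureTheory Topology

/-- Sup-convolution `R^α[U](z,r)`. -/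
noncomputable def Rsup {m : ℕ} (U : EuclideanSpace ℝ (Fin m) → ℝ) (α : ℝ)
    (z r : EuclideanSpace ℝ (Fin m)) : ℝ :=
  sSup ((fun Z => U Z - ⟪r, Z - z⟫ - ‖Z - z‖ ^ 2 / (2 * α)) '' closedBall z 1)

set_option maxHeartbeats 1000000 in
private lemma aux_iterated_two_diff {E : Type*} [NormedAddCommGroup E] [NormedSpace ℝ E]
    (f h : E → ℝ) (z : E) (c : ℝ)
    (hb : ‖fderiv ℝ (fderiv ℝ f) z - fderiv ℝ (fderiv ℝ h) z‖ ≤ c) :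
    ‖iteratedFDeriv ℝ 2 f z - iteratedFDeriv ℝ 2 h z‖ ≤ c := by
  have hc : 0 ≤ c := le_trans (norm_nonneg (fderiv ℝ (fderiv ℝ f) z - fderiv ℝ (fderiv ℝ h) z)) hb
  refine ContinuousMultilinearMap.opNorm_le_bound hc (fun v => ?_)
  have hv : (iteratedFDeriv ℝ 2 f z - iteratedFDeriv ℝ 2 h z) v
      = (fderiv ℝ (fderiv ℝ f) z - fderiv ℝ (fderiv ℝ h) z) (v 0) (v 1) := by
    rw [ContinuousMultilinearMap.sub_apply, iteratedFDeriv_two_apply f,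
      iteratedFDeriv_two_apply h]
    simp [ContinuousLinearMap.sub_apply]
  rw [hv]
  calc ‖(fderiv ℝ (fderiv ℝ f) z - fderiv ℝ (fderiv ℝ h) z) (v 0) (v 1)‖
      ≤ ‖(fderiv ℝ (fderiv ℝ f) z - fderiv ℝ (fderiv ℝ h) z) (v 0)‖ * ‖v 1‖ :=
        ContinuousLinearMap.le_opNorm _ _
  _ ≤ (‖fderiv ℝ (fderiv ℝ f) z - fderiv ℝ (fderiv ℝ h) z‖ * ‖v 0‖) * ‖v 1‖ :=
        mul_le_mul_of_nonneg_right (ContinuousLinearMap.le_opNorm _ _) (norm_nonneg _)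
  _ ≤ (c * ‖v 0‖) * ‖v 1‖ :=
        mul_le_mul_of_nonneg_right (mul_le_mul_of_nonneg_right hb (norm_nonneg _))
          (norm_nonneg _)
  _ = c * ∏ i, ‖v i‖ := by rw [Fin.prod_univ_two]; ring

set_option maxHeartbeats 4000000
/-- if `U` is `C²` then, for every `r`, `x` and `k̄ > 0`, there is `ᾱ > 0`
such that for `0 < α ≤ ᾱ` the function `z ↦ R^α[U](z,r)` is `C²` on the ball `B(x,k̄)`;
moreover, as `α → 0⁺`, it converges to `U` uniformly on `B(x,k̄)` together with its
gradient and Hessian. -/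
theorem statement2 {m : ℕ} (U : EuclideanSpace ℝ (Fin m) → ℝ) (hU : ContDiff ℝ 2 U)
    (r x : EuclideanSpace ℝ (Fin m)) (kb : ℝ) (hkb : 0 < kb) :
    ∃ ab > 0,
      (∀ α : ℝ, 0 < α → α ≤ ab →
        ContDiffOn ℝ 2 (fun z => Rsup U α z r) (ball x kb)) ∧
      TendstoUniformlyOn (fun (α : ℝ) z => Rsup U α z r) U (𝓝[>] (0:ℝ)) (ball x kb) ∧
      TendstoUniformlyOn (fun (α : ℝ) z => fderiv ℝ (fun w => Rsup U α w r) z)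
        (fun z => fderiv ℝ U z) (𝓝[>] (0:ℝ)) (ball x kb) ∧
      TendstoUniformlyOn (fun (α : ℝ) z => iteratedFDeriv ℝ 2 (fun w => Rsup U α w r) z)
        (fun z => iteratedFDeriv ℝ 2 U z) (𝓝[>] (0:ℝ)) (ball x kb) := by

  have hg2 : ContDiff ℝ 1 (fderiv ℝ U) := hU.fderiv_right (by norm_num)
  set G : (EuclideanSpace ℝ (Fin m)) → (EuclideanSpace ℝ (Fin m)) := fun v => (InnerProductSpace.toDual ℝ (EuclideanSpace ℝ (Fin m))).symm (fderiv ℝ U v) with hGdef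
  have hG : ContDiff ℝ 1 G :=
    ((InnerProductSpace.toDual ℝ (EuclideanSpace ℝ (Fin m))).symm.contDiff.of_le le_top).comp hg2
  have hGinner : ∀ v u : (EuclideanSpace ℝ (Fin m)), ⟪G v, u⟫ = fderiv ℝ U v u := fun v u =>
    InnerProductSpace.toDual_symm_apply
  set K1 : Set (EuclideanSpace ℝ (Fin m)) := closedBall x (kb + 2) with hK1def
  have hK1c : IsCompact K1 := isCompact_closedBall x _
  -- bound B for ‖G‖ on K1
  obtain ⟨B, hB0', hB⟩ : ∃ B : ℝ, 0 ≤ B ∧ ∀ v ∈ K1, ‖G v‖ ≤ B := by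
    obtain ⟨B0, hB0⟩ := hK1c.exists_bound_of_continuousOn hG.continuous.continuousOn
    exact ⟨max B0 0, le_max_right _ _, fun v hv => le_trans (hB0 v hv) (le_max_left _ _)⟩
  -- bound M for ‖fderiv G‖ and ‖fderiv (fderiv U)‖ on K1
  obtain ⟨M, hM0, hMG, hMg⟩ : ∃ M : ℝ, 0 ≤ M ∧ (∀ v ∈ K1, ‖fderiv ℝ G v‖ ≤ M) ∧
      ∀ v ∈ K1, ‖fderiv ℝ (fderiv ℝ U) v‖ ≤ M := by
    obtain ⟨M1, hM1⟩ := hK1c.exists_bound_of_continuousOn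
      (hG.continuous_fderiv one_ne_zero).continuousOn
    obtain ⟨M2, hM2⟩ := hK1c.exists_bound_of_continuousOn
      (hg2.continuous_fderiv one_ne_zero).continuousOn
    refine ⟨max (max M1 M2) 0, le_max_right _ _, fun v hv => ?_, fun v hv => ?_⟩
    · exact le_trans (hM1 v hv) (le_trans (le_max_left _ _) (le_max_left _ _))
    · exact le_trans (hM2 v hv) (le_trans (le_max_right _ _) (le_max_left _ _))
  obtain ⟨C, hC, hCge⟩ : ∃ C : ℝ, 0 < C ∧ B + ‖r‖ ≤ C := ⟨B + ‖r‖ + 1, by positivity, by linarith⟩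
  obtain ⟨ab, hab, habM, habC⟩ : ∃ ab : ℝ, 0 < ab ∧ (∀ α : ℝ, 0 < α → α ≤ ab → α * M ≤ 1/2) ∧
      ∀ α : ℝ, 0 < α → α ≤ ab → α * C ≤ 1/2 := by
    refine ⟨min (1/(2*(M+1))) (1/(2*C)), lt_min (by positivity) (by positivity), ?_, ?_⟩
    · intro α hα1 hα2
      have h1 : α ≤ 1/(2*(M+1)) := le_trans hα2 (min_le_left _ _)
      rw [le_div_iff₀ (by positivity : (0:ℝ) < 2*(M+1))] at h1
      nlinarith
    · intro α hα1 hα2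
      have h1 : α ≤ 1/(2*C) := le_trans hα2 (min_le_right _ _)
      rw [le_div_iff₀ (by positivity : (0:ℝ) < 2*C)] at h1
      nlinarith
  -- Lipschitz bounds
  have hGlip : ∀ u ∈ K1, ∀ v ∈ K1, ‖G u - G v‖ ≤ M * ‖u - v‖ := by
    intro u hu v hv
    exact Convex.norm_image_sub_le_of_norm_fderiv_le
      (fun w _ => (hG.differentiable one_ne_zero).differentiableAt)
      hMG (convex_closedBall x _) hv hu
  have hglip : ∀ u ∈ K1, ∀ v ∈ K1, ‖fderiv ℝ U u - fderiv ℝ U v‖ ≤ M * ‖u - v‖ := by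
    intro u hu v hv
    exact Convex.norm_image_sub_le_of_norm_fderiv_le
      (fun w _ => (hg2.differentiable one_ne_zero).differentiableAt)
      hMg (convex_closedBall x _) hv hu
  have hGnorm : ∀ v : (EuclideanSpace ℝ (Fin m)), ‖G v‖ = ‖fderiv ℝ U v‖ := fun v =>
    LinearIsometryEquiv.norm_map _ _
  have hUlip : ∀ u ∈ K1, ∀ v ∈ K1, ‖U u - U v‖ ≤ B * ‖u - v‖ := by
    intro u hu v hv
    exact Convex.norm_image_sub_le_of_norm_fderiv_le
      (fun w _ => hU.differentiable two_ne_zero |>.differentiableAt)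
      (fun w hw => by rw [← hGnorm]; exact hB w hw) (convex_closedBall x _) hv hu
  -- ball inclusions
  have hsubK1 : ∀ z ∈ ball x kb, closedBall z 1 ⊆ K1 := by
    intro z hz v hv
    have h1 : dist z x < kb := mem_ball.mp hz
    have h2 : dist v z ≤ 1 := mem_closedBall.mp hv
    have : dist v x ≤ dist v z + dist z x := dist_triangle _ _ _
    exact mem_closedBall.mpr (by linarith)
  -- injectivity of Φ on K1
  have hinj : ∀ α : ℝ, 0 < α → α ≤ ab → ∀ u ∈ K1, ∀ v ∈ K1,
      u - α • (G u - r) = v - α • (G v - r) → u = v := by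
    intro α hα1 hα2 u hu v hv huv
    have h1 : u - v = α • (G u - G v) := by
      linear_combination (norm := module) huv
    have h2 : ‖u - v‖ ≤ α * M * ‖u - v‖ := by
      calc ‖u - v‖ = α * ‖G u - G v‖ := by
            rw [h1, norm_smul, Real.norm_eq_abs, abs_of_pos hα1]
      _ ≤ α * (M * ‖u - v‖) := mul_le_mul_of_nonneg_left (hGlip u hu v hv) hα1.le
      _ = α * M * ‖u - v‖ := by ring
    have := habM α hα1 hα2
    have hn : (0:ℝ) ≤ ‖u - v‖ := norm_nonneg _
    have : ‖u - v‖ = 0 := by nlinarith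
    rwa [← sub_eq_zero, ← norm_eq_zero]
  -- existence of the fixed point
  have hex : ∀ (α : ℝ) (z : (EuclideanSpace ℝ (Fin m))), ∃ w : (EuclideanSpace ℝ (Fin m)), 0 < α → α ≤ ab → z ∈ ball x kb →
      (w - α • (G w - r) = z ∧ ‖w - z‖ ≤ α * C) := by
    intro α z
    by_cases hcond : 0 < α ∧ α ≤ ab ∧ z ∈ ball x kb
    · obtain ⟨hα1, hα2, hz⟩ := hcond
      set ρ : ℝ := α * C with hρdef
      have hρpos : 0 < ρ := by positivity
      have hρhalf : ρ ≤ 1/2 := habC α hα1 hα2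
      have hsK1 : closedBall z ρ ⊆ K1 := by
        intro v hv
        have h1 : dist v z ≤ ρ := mem_closedBall.mp hv
        have h2 : dist z x < kb := mem_ball.mp hz
        have : dist v x ≤ dist v z + dist z x := dist_triangle _ _ _
        exact mem_closedBall.mpr (by linarith)
      haveI : Nonempty (closedBall z ρ) := ⟨⟨z, mem_closedBall_self hρpos.le⟩⟩
      haveI : CompleteSpace (closedBall z ρ) :=
        (isClosed_closedBall (x := z) (ε := ρ)).completeSpace_coe
      have hTmem : ∀ v : closedBall z ρ, z + α • (G v.1 - r) ∈ closedBall z ρ := by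
        intro v
        have hvK1 : (v : (EuclideanSpace ℝ (Fin m))) ∈ K1 := hsK1 v.2
        have h1 : ‖G v.1 - r‖ ≤ B + ‖r‖ :=
          le_trans (norm_sub_le _ _) (add_le_add_left (hB _ hvK1) _)
        have : dist (z + α • (G v.1 - r)) z ≤ ρ := by
          rw [dist_eq_norm, add_sub_cancel_left, norm_smul, Real.norm_eq_abs,
            abs_of_pos hα1]
          calc α * ‖G v.1 - r‖ ≤ α * (B + ‖r‖) :=
                mul_le_mul_of_nonneg_left h1 hα1.le
          _ ≤ α * C := mul_le_mul_of_nonneg_left hCge hα1.le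
        exact mem_closedBall.mpr this
      set T : closedBall z ρ → closedBall z ρ := fun v => ⟨z + α • (G v.1 - r), hTmem v⟩
        with hTdef
      have hcontr : ContractingWith (2⁻¹ : NNReal) T := by
        constructor
        · rw [← NNReal.coe_lt_one]; norm_num
        · apply LipschitzWith.of_dist_le_mul
          intro a b
          have haK : (a : (EuclideanSpace ℝ (Fin m))) ∈ K1 := hsK1 a.2
          have hbK : (b : (EuclideanSpace ℝ (Fin m))) ∈ K1 := hsK1 b.2
          have h1 : dist (T a) (T b) = α * ‖G a.1 - G b.1‖ := by
            rw [Subtype.dist_eq, hTdef]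
            simp only [dist_eq_norm, add_sub_add_left_eq_sub, sub_sub_sub_cancel_right,
              ← smul_sub, norm_smul, Real.norm_eq_abs, abs_of_pos hα1]
          rw [h1, Subtype.dist_eq, dist_eq_norm]
          have h2 : α * ‖G a.1 - G b.1‖ ≤ α * (M * ‖(a:(EuclideanSpace ℝ (Fin m))) - b‖) :=
            mul_le_mul_of_nonneg_left (hGlip _ haK _ hbK) hα1.le
          have h3 := habM α hα1 hα2
          have h4 : (0:ℝ) ≤ ‖(a:(EuclideanSpace ℝ (Fin m))) - b‖ := norm_nonneg _
          have hco : ((2⁻¹ : NNReal) : ℝ) = 1/2 := by norm_num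
          rw [hco]
          nlinarith
      obtain ⟨w, hfix⟩ : ∃ w : closedBall z ρ, T w = w :=
        ⟨hcontr.fixedPoint T, hcontr.fixedPoint_isFixedPt⟩
      have hfix' : z + α • (G w.1 - r) = w.1 := congrArg Subtype.val hfix
      refine ⟨w.1, fun _ _ _ => ⟨?_, ?_⟩⟩
      · linear_combination (norm := module) -hfix'
      · have := mem_closedBall.mp w.2
        rwa [dist_eq_norm] at this
    · exact ⟨z, fun h1 h2 h3 => absurd ⟨h1, h2, h3⟩ hcond⟩
  choose y hy using hex
  have hyfix : ∀ α : ℝ, 0 < α → α ≤ ab → ∀ z ∈ ball x kb,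
      y α z - α • (G (y α z) - r) = z := fun α h1 h2 z hz => (hy α z h1 h2 hz).1
  have hynear : ∀ α : ℝ, 0 < α → α ≤ ab → ∀ z ∈ ball x kb,
      ‖y α z - z‖ ≤ α * C := fun α h1 h2 z hz => (hy α z h1 h2 hz).2
  have hyball : ∀ α : ℝ, 0 < α → α ≤ ab → ∀ z ∈ ball x kb, y α z ∈ closedBall z 1 := by
    intro α h1 h2 z hz
    have ha := hynear α h1 h2 z hz
    have hb := habC α h1 h2
    refine mem_closedBall.mpr ?_
    rw [dist_eq_norm]
    exact le_trans ha (le_trans hb (by norm_num))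
  have hyK1 : ∀ α : ℝ, 0 < α → α ≤ ab → ∀ z ∈ ball x kb, y α z ∈ K1 :=
    fun α h1 h2 z hz => hsubK1 z hz (hyball α h1 h2 z hz)
  have hUdiff : Differentiable ℝ U := hU.differentiable two_ne_zero
  -- value of the sup-convolution
  have hval : ∀ α : ℝ, 0 < α → α ≤ ab → ∀ z ∈ ball x kb,
      Rsup U α z r = U (y α z) - ⟪r, y α z - z⟫ - ‖y α z - z‖^2 / (2*α) := by
    intro α hα1 hα2 z hz
    have hwK1 : y α z ∈ K1 := hyK1 α hα1 hα2 z hz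
    set w : (EuclideanSpace ℝ (Fin m)) := y α z with hwdef
    have hkey : ∀ Z ∈ closedBall z 1,
        U Z - ⟪r, Z - z⟫ - ‖Z - z‖^2 / (2*α) ≤ U w - ⟪r, w - z⟫ - ‖w - z‖^2 / (2*α) := by
      intro Z hZ
      have hZK1 : Z ∈ K1 := hsubK1 z hz hZ
      set c : ℝ → (EuclideanSpace ℝ (Fin m)) := fun t => w + t • (Z - w) with hcdef
      have hcsub : ∀ t : ℝ, c t - z = (w - z) + t • (Z - w) := by
        intro t; simp only [hcdef]; abel
      have hcw : ∀ t : ℝ, c t - w = t • (Z - w) := by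
        intro t; simp only [hcdef]; abel
      have hwz1 : ‖w - z‖ ≤ 1 := by
        have h1 := hynear α hα1 hα2 z hz
        have h2 := habC α hα1 hα2
        calc ‖w - z‖ ≤ α * C := h1
        _ ≤ 1 := le_trans h2 (by norm_num)
      have hZz1 : ‖Z - z‖ ≤ 1 := by rw [← dist_eq_norm]; exact mem_closedBall.mp hZ
      have hcK1 : ∀ t ∈ Set.Icc (0:ℝ) 1, c t ∈ K1 := by
        intro t ht
        have h1 : c t - z = (1-t) • (w - z) + t • (Z - z) := by
          simp only [hcdef, sub_smul, smul_sub, one_smul]; abel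
        have h2 : ‖c t - z‖ ≤ (1-t) * ‖w - z‖ + t * ‖Z - z‖ := by
          rw [h1]
          refine le_trans (norm_add_le _ _) (le_of_eq ?_)
          rw [norm_smul, norm_smul, Real.norm_eq_abs, Real.norm_eq_abs,
            abs_of_nonneg (by linarith [ht.2] : (0:ℝ) ≤ 1 - t), abs_of_nonneg ht.1]
        apply hsubK1 z hz
        refine mem_closedBall.mpr ?_
        rw [dist_eq_norm]
        have ht1 := ht.1; have ht2 := ht.2
        nlinarith [norm_nonneg (w - z), norm_nonneg (Z - z)]
      have hcderiv : ∀ t : ℝ, HasDerivAt c (Z - w) t := by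
        intro t
        simpa [hcdef] using ((hasDerivAt_id t).smul_const (Z - w)).const_add w
      have hU1 : ∀ t : ℝ, HasDerivAt (fun s => U (c s)) ⟪G (c t), Z - w⟫ t := by
        intro t
        have h1 : HasFDerivAt U (fderiv ℝ U (c t)) (c t) := (hUdiff (c t)).hasFDerivAt
        have h2 := h1.comp_hasDerivAt t (hcderiv t)
        rw [hGinner]
        exact h2
      have hi2 : ∀ t : ℝ, HasDerivAt (fun s => ⟪r, c s - z⟫) ⟪r, Z - w⟫ t := by
        intro t
        have heq : (fun s => ⟪r, c s - z⟫) = fun s => ⟪r, w - z⟫ + s * ⟪r, Z - w⟫ := by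
          funext s; rw [hcsub s, inner_add_right, real_inner_smul_right]
        rw [heq]
        simpa using ((hasDerivAt_id t).mul_const ⟪r, Z - w⟫).const_add ⟪r, w - z⟫
      have hn2 : ∀ t : ℝ, HasDerivAt (fun s => ‖c s - z‖^2)
          (2 * ⟪w - z, Z - w⟫ + t * (2 * ‖Z - w‖^2)) t := by
        intro t
        have heq : (fun s => ‖c s - z‖^2)
            = fun s => ‖w - z‖^2 + s * (2 * ⟪w - z, Z - w⟫) + s^2 * ‖Z - w‖^2 := by
          funext s
          rw [hcsub s, norm_add_sq_real, real_inner_smul_right, norm_smul,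
            Real.norm_eq_abs, mul_pow, sq_abs]
          ring
        rw [heq]
        have h1 : HasDerivAt (fun s : ℝ => s^2) (2*t) t := by simpa using hasDerivAt_pow 2 t
        have h2 := (((hasDerivAt_id t).mul_const (2*⟪w - z, Z - w⟫)).const_add
          (‖w - z‖^2)).add (h1.mul_const (‖Z - w‖^2))
        have h3 : (1 * (2*⟪w - z, Z - w⟫) + 2*t*‖Z - w‖^2) = 2 * ⟪w - z, Z - w⟫ + t * (2 * ‖Z - w‖^2) := by ring
        exact h2.congr_deriv h3
      have hψ : ∀ t : ℝ, HasDerivAt (fun s => U (c s) - ⟪r, c s - z⟫ - ‖c s - z‖^2/(2*α))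
          (⟪G (c t), Z - w⟫ - ⟪r, Z - w⟫
            - (2 * ⟪w - z, Z - w⟫ + t * (2 * ‖Z - w‖^2))/(2*α)) t :=
        fun t => ((hU1 t).sub (hi2 t)).sub ((hn2 t).div_const (2*α))
      have hfixw : w - z = α • (G w - r) := by
        have h0 : w - α • (G w - r) = z := hyfix α hα1 hα2 z hz
        linear_combination (norm := module) h0
      have hDle : ∀ t ∈ Set.Icc (0:ℝ) 1,
          ⟪G (c t), Z - w⟫ - ⟪r, Z - w⟫
            - (2 * ⟪w - z, Z - w⟫ + t * (2 * ‖Z - w‖^2))/(2*α) ≤ 0 := by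
        intro t ht
        have hinner1 : ⟪w - z, Z - w⟫ = α * (⟪G w, Z - w⟫ - ⟪r, Z - w⟫) := by
          rw [hfixw, real_inner_smul_left, inner_sub_left]
        have hsplit : ⟪G (c t), Z - w⟫ = ⟪G (c t) - G w, Z - w⟫ + ⟪G w, Z - w⟫ := by
          rw [inner_sub_left]; ring
        have hGb : ⟪G (c t) - G w, Z - w⟫ ≤ M * (t * ‖Z - w‖^2) := by
          have h1 := real_inner_le_norm (G (c t) - G w) (Z - w)
          have h2 : ‖G (c t) - G w‖ ≤ M * (t * ‖Z - w‖) := by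
            have h3 := hGlip (c t) (hcK1 t ht) w hwK1
            rwa [hcw t, norm_smul, Real.norm_eq_abs, abs_of_nonneg ht.1] at h3
          have h3 : (0:ℝ) ≤ ‖Z - w‖ := norm_nonneg _
          nlinarith
        have hd1 : (2 * ⟪w - z, Z - w⟫ + t * (2 * ‖Z - w‖^2))/(2*α)
            = (⟪G w, Z - w⟫ - ⟪r, Z - w⟫) + t * ‖Z - w‖^2 / α := by
          rw [hinner1]; field_simp
        rw [hsplit, hd1]
        have hαM := habM α hα1 hα2
        have hdiv : M * (t * ‖Z - w‖^2) ≤ t * ‖Z - w‖^2 / α := by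
          rw [le_div_iff₀ hα1]
          nlinarith [sq_nonneg ‖Z - w‖, ht.1, mul_nonneg ht.1 (sq_nonneg ‖Z - w‖)]
        linarith
      have hanti : AntitoneOn (fun s => U (c s) - ⟪r, c s - z⟫ - ‖c s - z‖^2/(2*α))
          (Set.Icc (0:ℝ) 1) := by
        apply antitoneOn_of_deriv_nonpos (convex_Icc (0:ℝ) 1)
        · exact fun t _ => (hψ t).continuousAt.continuousWithinAt
        · intro t ht
          exact ((hψ t).differentiableAt).differentiableWithinAt
        · intro t ht
          rw [interior_Icc] at ht
          rw [(hψ t).deriv]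
          exact hDle t ⟨ht.1.le, ht.2.le⟩
      have h01 := hanti (Set.left_mem_Icc.mpr zero_le_one)
        (Set.right_mem_Icc.mpr zero_le_one) zero_le_one
      have hc0 : c 0 = w := by rw [hcdef]; simp
      have hc1 : c 1 = Z := by rw [hcdef]; simp
      simpa only [hc0, hc1] using h01
    have hgt : IsGreatest ((fun Z => U Z - ⟪r, Z - z⟫ - ‖Z - z‖^2/(2*α)) '' closedBall z 1)
        (U w - ⟪r, w - z⟫ - ‖w - z‖^2/(2*α)) := by
      constructor
      · exact ⟨w, hyball α hα1 hα2 z hz, rfl⟩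
      · rintro _ ⟨Z, hZ, rfl⟩
        exact hkey Z hZ
    exact hgt.csSup_eq
  -- smoothness package for y
  have hF3 : ∀ α : ℝ, 0 < α → α ≤ ab → ∀ z ∈ ball x kb,
      ContDiffAt ℝ 1 (y α) z ∧ ∃ Dy : (EuclideanSpace ℝ (Fin m)) →L[ℝ] (EuclideanSpace ℝ (Fin m)), HasFDerivAt (y α) Dy z ∧
        ‖Dy‖ ≤ 2 ∧ ‖Dy - ContinuousLinearMap.id ℝ (EuclideanSpace ℝ (Fin m))‖ ≤ 2*(α*M) := by
    intro α hα1 hα2 z hz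
    set w : (EuclideanSpace ℝ (Fin m)) := y α z with hwdef
    have hwK1 : w ∈ K1 := hyK1 α hα1 hα2 z hz
    have hwnear : ‖w - z‖ ≤ α*C := hynear α hα1 hα2 z hz
    have hwK1' : w ∈ closedBall x (kb+1) := by
      have h1 : dist z x < kb := mem_ball.mp hz
      have h2 := habC α hα1 hα2
      refine mem_closedBall.mpr ?_
      calc dist w x ≤ dist w z + dist z x := dist_triangle _ _ _
      _ ≤ kb + 1 := by rw [dist_eq_norm]; linarith
    set Φ : (EuclideanSpace ℝ (Fin m)) → (EuclideanSpace ℝ (Fin m)) := fun v => v - α • (G v - r) with hΦdef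
    have hΦw : Φ w = z := hyfix α hα1 hα2 z hz
    have hΦcd : ContDiff ℝ 1 Φ := contDiff_id.sub ((hG.sub contDiff_const).const_smul α)
    set A : (EuclideanSpace ℝ (Fin m)) →L[ℝ] (EuclideanSpace ℝ (Fin m)) := fderiv ℝ G w with hAdef
    have hAM : ‖A‖ ≤ M := hMG w hwK1
    have hGd : HasFDerivAt G A w := (hG.differentiable one_ne_zero w).hasFDerivAt
    have hsm : ‖α • A‖ < 1 := by
      have h1 := norm_smul α A
      rw [Real.norm_eq_abs, abs_of_pos hα1] at h1
      rw [h1]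
      have := habM α hα1 hα2
      nlinarith
    set uu : ((EuclideanSpace ℝ (Fin m)) →L[ℝ] (EuclideanSpace ℝ (Fin m)))ˣ := Units.oneSub (α • A) hsm with huudef
    set e : (EuclideanSpace ℝ (Fin m)) ≃L[ℝ] (EuclideanSpace ℝ (Fin m)) := ContinuousLinearEquiv.unitsEquiv ℝ (EuclideanSpace ℝ (Fin m)) uu with hedef
    have hecoe : (e : (EuclideanSpace ℝ (Fin m)) →L[ℝ] (EuclideanSpace ℝ (Fin m))) = ContinuousLinearMap.id ℝ (EuclideanSpace ℝ (Fin m)) - α • A := rfl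
    have hΦd : HasFDerivAt Φ (e : (EuclideanSpace ℝ (Fin m)) →L[ℝ] (EuclideanSpace ℝ (Fin m))) w := by
      rw [hecoe]
      exact (hasFDerivAt_id w).sub ((hGd.sub_const r).const_smul α)
    have hΦcdAt : ContDiffAt ℝ 1 Φ w := hΦcd.contDiffAt
    have hstrict : HasStrictFDerivAt Φ (e : (EuclideanSpace ℝ (Fin m)) →L[ℝ] (EuclideanSpace ℝ (Fin m))) w :=
      hΦcdAt.hasStrictFDerivAt' hΦd one_ne_zero
    have hliCD0 : ContDiffAt ℝ 1 (hΦcdAt.localInverse hΦd one_ne_zero) (Φ w) :=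
      hΦcdAt.to_localInverse hΦd one_ne_zero
    have hlidef : hΦcdAt.localInverse hΦd one_ne_zero
        = HasStrictFDerivAt.localInverse Φ e w hstrict := rfl
    set li : (EuclideanSpace ℝ (Fin m)) → (EuclideanSpace ℝ (Fin m)) := HasStrictFDerivAt.localInverse Φ e w hstrict with hlidef2
    rw [hlidef, hΦw] at hliCD0
    have hney : ∀ᶠ w' in 𝓝 z, w' ∈ ball x kb := isOpen_ball.eventually_mem hz
    have hrinv : ∀ᶠ w' in 𝓝 z, Φ (li w') = w' := by
      have h := hstrict.eventually_right_inverse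
      rwa [hΦw] at h
    have hlicont : ContinuousAt li z := by
      have h := hstrict.localInverse_continuousAt
      rwa [hΦw] at h
    have hliz : li z = w := by
      have h := hstrict.localInverse_apply_image
      rwa [hΦw] at h
    have hliK1 : ∀ᶠ w' in 𝓝 z, li w' ∈ K1 := by
      have h1 : ∀ᶠ v in 𝓝 w, v ∈ K1 := by
        filter_upwards [ball_mem_nhds w one_pos] with v hv
        have h2 : dist v w < 1 := mem_ball.mp hv
        have h3 : dist w x ≤ kb + 1 := mem_closedBall.mp hwK1'
        exact mem_closedBall.mpr (le_trans (dist_triangle v w x) (by linarith))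
      rw [ContinuousAt, hliz] at hlicont
      exact hlicont.eventually h1
    have hlicont2 : ContinuousAt li z := by
      have h := hstrict.localInverse_continuousAt
      rwa [hΦw] at h
    have heq : y α =ᶠ[𝓝 z] li := by
      filter_upwards [hney, hrinv, hliK1] with w' h1 h2 h3
      have h4 : Φ (y α w') = w' := hyfix α hα1 hα2 w' h1
      have h5 : y α w' ∈ K1 := hyK1 α hα1 hα2 w' h1
      exact hinj α hα1 hα2 _ h5 _ h3 (h4.trans h2.symm)
    have hyCD : ContDiffAt ℝ 1 (y α) z := hliCD0.congr_of_eventuallyEq heq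
    have hliD : HasStrictFDerivAt li (e.symm : (EuclideanSpace ℝ (Fin m)) →L[ℝ] (EuclideanSpace ℝ (Fin m))) (Φ w) := hstrict.to_localInverse
    rw [hΦw] at hliD
    have hyD : HasFDerivAt (y α) (e.symm : (EuclideanSpace ℝ (Fin m)) →L[ℝ] (EuclideanSpace ℝ (Fin m))) z :=
      hliD.hasFDerivAt.congr_of_eventuallyEq heq
    set Dy : (EuclideanSpace ℝ (Fin m)) →L[ℝ] (EuclideanSpace ℝ (Fin m)) := (e.symm : (EuclideanSpace ℝ (Fin m)) →L[ℝ] (EuclideanSpace ℝ (Fin m))) with hDydef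
    have hrel : ∀ v : (EuclideanSpace ℝ (Fin m)), Dy v = v + α • A (Dy v) := by
      intro v
      have h1 : (e : (EuclideanSpace ℝ (Fin m)) →L[ℝ] (EuclideanSpace ℝ (Fin m))) ((e.symm : (EuclideanSpace ℝ (Fin m)) →L[ℝ] (EuclideanSpace ℝ (Fin m))) v) = v := e.apply_symm_apply v
      rw [hecoe] at h1
      simp only [ContinuousLinearMap.sub_apply, ContinuousLinearMap.id_apply,
        ContinuousLinearMap.smul_apply] at h1
      linear_combination (norm := module) h1
    have hMα := habM α hα1 hα2
    have hDv : ∀ v : (EuclideanSpace ℝ (Fin m)), ‖Dy v‖ ≤ 2 * ‖v‖ := by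
      intro v
      have h2 : ‖A (Dy v)‖ ≤ M * ‖Dy v‖ :=
        le_trans (A.le_opNorm _) (mul_le_mul_of_nonneg_right hAM (norm_nonneg _))
      have h1 : ‖Dy v‖ ≤ ‖v‖ + α * M * ‖Dy v‖ := by
        calc ‖Dy v‖ = ‖v + α • A (Dy v)‖ := by rw [← hrel]
        _ ≤ ‖v‖ + ‖α • A (Dy v)‖ := norm_add_le _ _
        _ ≤ ‖v‖ + α * M * ‖Dy v‖ := by
            rw [norm_smul, Real.norm_eq_abs, abs_of_pos hα1]
            nlinarith
      have h3 := mul_le_mul_of_nonneg_right hMα (norm_nonneg (Dy v))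
      linarith
    have hDynorm : ‖Dy‖ ≤ 2 :=
      ContinuousLinearMap.opNorm_le_bound _ (by norm_num) hDv
    have hDyid : ‖Dy - ContinuousLinearMap.id ℝ (EuclideanSpace ℝ (Fin m))‖ ≤ 2*(α*M) := by
      refine ContinuousLinearMap.opNorm_le_bound _ (by positivity) (fun v => ?_)
      have h1 : (Dy - ContinuousLinearMap.id ℝ (EuclideanSpace ℝ (Fin m))) v = α • A (Dy v) := by
        rw [ContinuousLinearMap.sub_apply, ContinuousLinearMap.id_apply]
        conv_lhs => rw [hrel v]
        rw [add_sub_cancel_left]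
      rw [h1, norm_smul, Real.norm_eq_abs, abs_of_pos hα1]
      have h2 : ‖A (Dy v)‖ ≤ M * ‖Dy v‖ :=
        le_trans (A.le_opNorm _) (mul_le_mul_of_nonneg_right hAM (norm_nonneg _))
      have h3 := hDv v
      calc α * ‖A (Dy v)‖ ≤ α * (M * ‖Dy v‖) := mul_le_mul_of_nonneg_left h2 hα1.le
      _ ≤ α * (M * (2 * ‖v‖)) := by
          refine mul_le_mul_of_nonneg_left (mul_le_mul_of_nonneg_left h3 hM0) hα1.le
      _ = 2*(α*M)*‖v‖ := by ring
    exact ⟨hyCD, Dy, hyD, hDynorm, hDyid⟩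
  -- derivative of the sup-convolution
  have hF4 : ∀ α : ℝ, 0 < α → α ≤ ab → ∀ z ∈ ball x kb,
      HasFDerivAt (fun z' => Rsup U α z' r) (fderiv ℝ U (y α z)) z := by
    intro α hα1 hα2 z hz
    obtain ⟨-, Dy, hyD, -, -⟩ := hF3 α hα1 hα2 z hz
    set w : (EuclideanSpace ℝ (Fin m)) := y α z with hwdef
    have hfixw : w - z = α • (G w - r) := by
      have h0 : w - α • (G w - r) = z := hyfix α hα1 hα2 z hz
      linear_combination (norm := module) h0
    have hUd : HasFDerivAt (fun z' => U (y α z')) ((fderiv ℝ U w).comp Dy) z :=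
      (hUdiff w).hasFDerivAt.comp z hyD
    have hsub : HasFDerivAt (fun z' => y α z' - z') (Dy - ContinuousLinearMap.id ℝ (EuclideanSpace ℝ (Fin m))) z :=
      hyD.sub (hasFDerivAt_id z)
    have hinn : HasFDerivAt (fun z' => ⟪r, y α z' - z'⟫)
        ((innerSL ℝ r).comp (Dy - ContinuousLinearMap.id ℝ (EuclideanSpace ℝ (Fin m)))) z :=
      (innerSL ℝ r).hasFDerivAt.comp z hsub
    have hnrm : HasFDerivAt (fun z' => ⟪y α z' - z', y α z' - z'⟫)
        ((fderivInnerCLM ℝ (w - z, w - z)).comp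
          ((Dy - ContinuousLinearMap.id ℝ (EuclideanSpace ℝ (Fin m))).prod (Dy - ContinuousLinearMap.id ℝ (EuclideanSpace ℝ (Fin m))))) z :=
      HasFDerivAt.inner ℝ hsub hsub
    have hnrm2 : HasFDerivAt (fun z' => ‖y α z' - z'‖^2/(2*α))
        ((2*α)⁻¹ • ((fderivInnerCLM ℝ (w - z, w - z)).comp
          ((Dy - ContinuousLinearMap.id ℝ (EuclideanSpace ℝ (Fin m))).prod (Dy - ContinuousLinearMap.id ℝ (EuclideanSpace ℝ (Fin m)))))) z := by
      have heq : (fun z' : (EuclideanSpace ℝ (Fin m)) => ‖y α z' - z'‖^2/(2*α))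
          = fun z' => (2*α)⁻¹ * ⟪y α z' - z', y α z' - z'⟫ := by
        funext z'
        rw [real_inner_self_eq_norm_sq, div_eq_inv_mul]
      rw [heq]
      exact hnrm.const_mul _
    have htot := (hUd.sub hinn).sub hnrm2
    have hev : (fun z' => Rsup U α z' r)
        =ᶠ[𝓝 z] (fun z' => U (y α z') - ⟪r, y α z' - z'⟫ - ‖y α z' - z'‖^2/(2*α)) := by
      filter_upwards [isOpen_ball.eventually_mem hz] with z' hz'
      exact hval α hα1 hα2 z' hz'
    have htot2 : HasFDerivAt (fun z' => Rsup U α z' r)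
        ((fderiv ℝ U w).comp Dy - (innerSL ℝ r).comp (Dy - ContinuousLinearMap.id ℝ (EuclideanSpace ℝ (Fin m)))
          - (2*α)⁻¹ • ((fderivInnerCLM ℝ (w - z, w - z)).comp
            ((Dy - ContinuousLinearMap.id ℝ (EuclideanSpace ℝ (Fin m))).prod (Dy - ContinuousLinearMap.id ℝ (EuclideanSpace ℝ (Fin m)))))) z :=
      htot.congr_of_eventuallyEq hev
    have hDeq : (fderiv ℝ U w).comp Dy
        - (innerSL ℝ r).comp (Dy - ContinuousLinearMap.id ℝ (EuclideanSpace ℝ (Fin m)))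
        - (2*α)⁻¹ • ((fderivInnerCLM ℝ (w - z, w - z)).comp
          ((Dy - ContinuousLinearMap.id ℝ (EuclideanSpace ℝ (Fin m))).prod (Dy - ContinuousLinearMap.id ℝ (EuclideanSpace ℝ (Fin m)))))
        = fderiv ℝ U w := by
      ext v
      simp only [ContinuousLinearMap.sub_apply, ContinuousLinearMap.coe_comp',
        Function.comp_apply, ContinuousLinearMap.smul_apply,
        ContinuousLinearMap.prod_apply, innerSL_apply_apply, fderivInnerCLM_apply,
        smul_eq_mul, ContinuousLinearMap.id_apply]
      have e1 : ⟪Dy v - v, w - z⟫ = ⟪w - z, Dy v - v⟫ := real_inner_comm _ _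
      have e2 : ⟪w - z, Dy v - v⟫
          = α * (fderiv ℝ U w (Dy v - v) - ⟪r, Dy v - v⟫) := by
        rw [hfixw, real_inner_smul_left, inner_sub_left, hGinner]
      have e3 : fderiv ℝ U w (Dy v - v) = fderiv ℝ U w (Dy v) - fderiv ℝ U w v :=
        map_sub _ _ _
      rw [e1, e2, e3]
      have hαne : α ≠ 0 := ne_of_gt hα1
      field_simp
      ring
    rw [hDeq] at htot2
    exact htot2
  have hF5 : ∀ α : ℝ, 0 < α → α ≤ ab → ∀ z ∈ ball x kb,
      fderiv ℝ (fun z' => Rsup U α z' r) z = fderiv ℝ U (y α z) :=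
    fun α hα1 hα2 z hz => (hF4 α hα1 hα2 z hz).fderiv
  have hballK1 : ∀ z ∈ ball x kb, z ∈ K1 := by
    intro z hz
    have h1 : dist z x < kb := mem_ball.mp hz
    exact mem_closedBall.mpr (by linarith)
  -- Hessian formula and bound
  have hHess : ∀ α : ℝ, 0 < α → α ≤ ab → ∀ z ∈ ball x kb,
      ‖fderiv ℝ (fderiv ℝ (fun z' => Rsup U α z' r)) z - fderiv ℝ (fderiv ℝ U) z‖
        ≤ 2*(α*M)*M + ‖fderiv ℝ (fderiv ℝ U) (y α z) - fderiv ℝ (fderiv ℝ U) z‖ := by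
    intro α hα1 hα2 z hz
    obtain ⟨-, Dy, hyD, hDy2, hDyid⟩ := hF3 α hα1 hα2 z hz
    have hev : fderiv ℝ (fun z' => Rsup U α z' r)
        =ᶠ[𝓝 z] (fun z' => fderiv ℝ U (y α z')) := by
      filter_upwards [isOpen_ball.eventually_mem hz] with z' hz'
      exact hF5 α hα1 hα2 z' hz'
    have hgy : HasFDerivAt (fun z' => fderiv ℝ U (y α z'))
        ((fderiv ℝ (fderiv ℝ U) (y α z)).comp Dy) z :=
      ((hg2.differentiable one_ne_zero) (y α z)).hasFDerivAt.comp z hyD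
    have heq2 : fderiv ℝ (fderiv ℝ (fun z' => Rsup U α z' r)) z
        = (fderiv ℝ (fderiv ℝ U) (y α z)).comp Dy := by
      rw [hev.fderiv_eq]
      exact hgy.fderiv
    rw [heq2]
    have hwK1 : y α z ∈ K1 := hyK1 α hα1 hα2 z hz
    have hsplit : (fderiv ℝ (fderiv ℝ U) (y α z)).comp Dy - fderiv ℝ (fderiv ℝ U) z
        = (fderiv ℝ (fderiv ℝ U) (y α z)).comp (Dy - ContinuousLinearMap.id ℝ (EuclideanSpace ℝ (Fin m)))
          + (fderiv ℝ (fderiv ℝ U) (y α z) - fderiv ℝ (fderiv ℝ U) z) := by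
      ext v
      simp only [ContinuousLinearMap.sub_apply, ContinuousLinearMap.coe_comp',
        Function.comp_apply, ContinuousLinearMap.add_apply, ContinuousLinearMap.id_apply,
        map_sub]
      abel
    rw [hsplit]
    refine le_trans (norm_add_le ((fderiv ℝ (fderiv ℝ U) (y α z)).comp (Dy - ContinuousLinearMap.id ℝ (EuclideanSpace ℝ (Fin m)))) (fderiv ℝ (fderiv ℝ U) (y α z) - fderiv ℝ (fderiv ℝ U) z)) (add_le_add ?_ le_rfl)
    calc ‖(fderiv ℝ (fderiv ℝ U) (y α z)).comp (Dy - ContinuousLinearMap.id ℝ (EuclideanSpace ℝ (Fin m)))‖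
        ≤ ‖fderiv ℝ (fderiv ℝ U) (y α z)‖ * ‖Dy - ContinuousLinearMap.id ℝ (EuclideanSpace ℝ (Fin m))‖ :=
          ContinuousLinearMap.opNorm_comp_le _ _
    _ ≤ M * (2*(α*M)) := by
        refine mul_le_mul (hMg _ hwK1) hDyid (norm_nonneg _) hM0
    _ = 2*(α*M)*M := by ring
  refine ⟨ab, hab, fun α hα1 hα2 => ?_, ?_, ?_, ?_⟩
  · -- C² smoothness
    have h2 : (2 : WithTop ℕ∞) = 1 + 1 := by norm_num
    rw [h2, contDiffOn_succ_iff_fderiv_of_isOpen isOpen_ball]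
    refine ⟨fun z hz => (hF4 α hα1 hα2 z hz).differentiableAt.differentiableWithinAt,
      ?_, ?_⟩
    · intro h
      exact absurd h (by norm_num)
    · refine ContDiffOn.congr ?_ (fun z hz => hF5 α hα1 hα2 z hz)
      intro z hz
      exact ((hg2.contDiffAt).comp z (hF3 α hα1 hα2 z hz).1).contDiffWithinAt
  · -- uniform convergence of values
    rw [Metric.tendstoUniformlyOn_iff]
    intro ε hε
    obtain ⟨D, hD0, hDe⟩ : ∃ D : ℝ, 0 ≤ D ∧ B*C + ‖r‖*C + C*C/2 ≤ D :=
      ⟨B*C + ‖r‖*C + C*C/2, by positivity, le_rfl⟩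
    have hδpos : 0 < min ab (ε/(D+1)) := lt_min hab (by positivity)
    filter_upwards [Ioc_mem_nhdsGT_of_mem (Set.mem_Ico.mpr ⟨le_refl (0:ℝ), hδpos⟩)]
      with α hα z hz
    obtain ⟨hα1, hαδ⟩ := hα
    have hα2 : α ≤ ab := le_trans hαδ (min_le_left _ _)
    have hαε : α ≤ ε/(D+1) := le_trans hαδ (min_le_right _ _)
    have hwK1 : y α z ∈ K1 := hyK1 α hα1 hα2 z hz
    have h3 : ‖y α z - z‖ ≤ α * C := hynear α hα1 hα2 z hz
    have h1 : ‖U z - U (y α z)‖ ≤ B * ‖z - y α z‖ := hUlip z (hballK1 z hz) _ hwK1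
    rw [norm_sub_rev z] at h1
    have h2 : |⟪r, y α z - z⟫| ≤ ‖r‖ * ‖y α z - z‖ := abs_real_inner_le_norm _ _
    have h4 : ‖y α z - z‖^2/(2*α) ≤ α * (C*C)/2 := by
      rw [div_le_iff₀ (by positivity : (0:ℝ) < 2*α)]
      nlinarith [norm_nonneg (y α z - z)]
    rw [Real.dist_eq, hval α hα1 hα2 z hz]
    have e : U z - (U (y α z) - ⟪r, y α z - z⟫ - ‖y α z - z‖^2/(2*α))
        = (U z - U (y α z)) + ⟪r, y α z - z⟫ + ‖y α z - z‖^2/(2*α) := by ring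
    rw [e]
    have habs : |(U z - U (y α z)) + ⟪r, y α z - z⟫ + ‖y α z - z‖^2/(2*α)|
        ≤ |U z - U (y α z)| + |⟪r, y α z - z⟫| + |‖y α z - z‖^2/(2*α)| :=
      le_trans (abs_add_le _ _) (add_le_add_left (abs_add_le _ _) _)
    have hq : |‖y α z - z‖^2/(2*α)| = ‖y α z - z‖^2/(2*α) :=
      abs_of_nonneg (by positivity)
    have h1' : |U z - U (y α z)| ≤ B * (α*C) := by
      rw [← Real.norm_eq_abs]
      refine le_trans h1 (mul_le_mul_of_nonneg_left h3 hB0')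
    have h2' : |⟪r, y α z - z⟫| ≤ ‖r‖ * (α*C) :=
      le_trans h2 (mul_le_mul_of_nonneg_left h3 (norm_nonneg r))
    have hDα : α*(D+1) ≤ ε := by
      rw [le_div_iff₀ (by positivity : (0:ℝ) < D+1)] at hαε
      exact hαε
    calc |(U z - U (y α z)) + ⟪r, y α z - z⟫ + ‖y α z - z‖^2/(2*α)|
        ≤ B * (α*C) + ‖r‖ * (α*C) + α*(C*C)/2 := by
          rw [hq] at habs
          exact le_trans habs (by linarith)
    _ = α * (B*C + ‖r‖*C + C*C/2) := by ring
    _ ≤ α * D := mul_le_mul_of_nonneg_left hDe hα1.le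
    _ < ε := by nlinarith
  · -- uniform convergence of gradients
    rw [Metric.tendstoUniformlyOn_iff]
    intro ε hε
    have hδpos : 0 < min ab (ε/(M*C+1)) := lt_min hab (by positivity)
    filter_upwards [Ioc_mem_nhdsGT_of_mem (Set.mem_Ico.mpr ⟨le_refl (0:ℝ), hδpos⟩)]
      with α hα z hz
    obtain ⟨hα1, hαδ⟩ := hα
    have hα2 : α ≤ ab := le_trans hαδ (min_le_left _ _)
    have hαε : α ≤ ε/(M*C+1) := le_trans hαδ (min_le_right _ _)
    rw [dist_eq_norm, hF5 α hα1 hα2 z hz]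
    have hwK1 : y α z ∈ K1 := hyK1 α hα1 hα2 z hz
    have h1 : ‖fderiv ℝ U z - fderiv ℝ U (y α z)‖ ≤ M * ‖z - y α z‖ :=
      hglip z (hballK1 z hz) _ hwK1
    rw [norm_sub_rev z] at h1
    have h3 : ‖y α z - z‖ ≤ α * C := hynear α hα1 hα2 z hz
    have hDα : α*(M*C+1) ≤ ε := by
      rw [le_div_iff₀ (by positivity : (0:ℝ) < M*C+1)] at hαε
      exact hαε
    calc ‖fderiv ℝ U z - fderiv ℝ U (y α z)‖ ≤ M * ‖y α z - z‖ := h1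
    _ ≤ M * (α * C) := mul_le_mul_of_nonneg_left h3 hM0
    _ < ε := by nlinarith
  · -- uniform convergence of Hessians
    rw [Metric.tendstoUniformlyOn_iff]
    intro ε hε
    have hunif : UniformContinuousOn (fderiv ℝ (fderiv ℝ U)) K1 :=
      hK1c.uniformContinuousOn_of_continuous (hg2.continuous_fderiv one_ne_zero).continuousOn
    replace hunif : ∀ ε > 0, ∃ δ > 0, ∀ a ∈ K1, ∀ b ∈ K1, dist a b < δ →
        dist (fderiv ℝ (fderiv ℝ U) a) (fderiv ℝ (fderiv ℝ U) b) < ε :=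
      Metric.uniformContinuousOn_iff.mp (by exact hunif)
    obtain ⟨δ₀, hδ₀, hδ₀p⟩ := hunif (ε/2) (by positivity)
    have hδpos : 0 < min ab (min (δ₀/(2*C)) (ε/(8*(M*M+1)))) :=
      lt_min hab (lt_min (by positivity) (by positivity))
    filter_upwards [Ioc_mem_nhdsGT_of_mem (Set.mem_Ico.mpr ⟨le_refl (0:ℝ), hδpos⟩)]
      with α hα z hz
    obtain ⟨hα1, hαδ⟩ := hα
    have hα2 : α ≤ ab := le_trans hαδ (min_le_left _ _)
    have hαδ₀ : α ≤ δ₀/(2*C) := le_trans hαδ (le_trans (min_le_right _ _) (min_le_left _ _))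
    have hαε : α ≤ ε/(8*(M*M+1)) :=
      le_trans hαδ (le_trans (min_le_right _ _) (min_le_right _ _))
    have hb := hHess α hα1 hα2 z hz
    have key := aux_iterated_two_diff (fun z' => Rsup U α z' r) U z _ hb
    rw [dist_eq_norm, norm_sub_rev]
    refine lt_of_le_of_lt key ?_
    have hwK1 : y α z ∈ K1 := hyK1 α hα1 hα2 z hz
    have h3 : ‖y α z - z‖ ≤ α * C := hynear α hα1 hα2 z hz
    have hdist : dist (y α z) z < δ₀ := by
      rw [dist_eq_norm]
      have h5 : α * C ≤ δ₀/2 := by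
        rw [le_div_iff₀ (by positivity : (0:ℝ) < 2*C)] at hαδ₀
        linarith [hαδ₀]
      linarith
    have h6 : ‖fderiv ℝ (fderiv ℝ U) (y α z) - fderiv ℝ (fderiv ℝ U) z‖ < ε/2 := by
      have := hδ₀p (y α z) hwK1 z (hballK1 z hz) hdist
      exact lt_of_eq_of_lt (dist_eq_norm (fderiv ℝ (fderiv ℝ U) (y α z)) (fderiv ℝ (fderiv ℝ U) z)).symm this
    have h7 : 2*(α*M)*M < ε/2 := by
      rw [le_div_iff₀ (by positivity : (0:ℝ) < 8*(M*M+1))] at hαε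
      nlinarith
    linarith
end

section
/- Let U:ℝ^m→ℝ be upper semicontinuous, α>0 and z,r∈ℝ^m. Suppose z̄ with |z̄−z|<1 attains the supremum defining R^α[U](z,r), i.e. R^α[U](z,r) = U(z̄) − r·(z̄−z) − |z̄−z|²/(2α). Then every superjet (s,A) of the function z' ↦ R^α[U](z',r) at the point z satisfies s = r + (z̄−z)/α, and (s,A) is a superjet of U at z̄. -/
open scoped RealInnerProductSpace
open Filter Metric MeasureTheory Topology

/-- The quadratic form `z ↦ ⟨Az, z⟩` of a matrix `A`. -/
noncomputable def quadF {d : ℕ} (A : Matrix (Fin d) (Fin d) ℝ)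
    (z : EuclideanSpace ℝ (Fin d)) : ℝ :=
  ⟪Matrix.toEuclideanLin A z, z⟫

/-- `(p, A)` is a superjet of `u` at `x`:
`u(x+z) ≤ u(x) + p·z + ½⟨Az,z⟩ + o(‖z‖²)` as `z → 0`. -/
def IsSuperjet {d : ℕ} (u : EuclideanSpace ℝ (Fin d) → ℝ) (x p : EuclideanSpace ℝ (Fin d))
    (A : Matrix (Fin d) (Fin d) ℝ) : Prop :=
  ∀ ε > 0, ∀ᶠ z in 𝓝 (0 : EuclideanSpace ℝ (Fin d)),
    u (x + z) ≤ u x + ⟪p, z⟫ + (1 / 2) * quadF A z + ε * ‖z‖ ^ 2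

lemma usc_bddAbove {X : Type*} [TopologicalSpace X] {f : X → ℝ}
    (hf : UpperSemicontinuous f) {K : Set X} (hK : IsCompact K) :
    BddAbove (f '' K) := by
  have hcov : K ⊆ ⋃ x : K, f ⁻¹' Set.Iio (f x + 1) := by
    intro y hy
    exact Set.mem_iUnion.2 ⟨⟨y, hy⟩, by simp⟩
  obtain ⟨t, ht⟩ := hK.elim_finite_subcover (fun x : K => f ⁻¹' Set.Iio (f ↑x + 1))
    (fun x => (upperSemicontinuous_iff_isOpen_preimage.1 hf) _) hcov
  obtain ⟨M, hM⟩ := (t.finite_toSet.image (fun x : K => f ↑x + 1)).bddAbove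
  refine ⟨M, ?_⟩
  rintro _ ⟨y, hy, rfl⟩
  obtain ⟨x, hxt, hyx⟩ := Set.mem_iUnion₂.1 (ht hy)
  exact le_trans (le_of_lt hyx) (hM ⟨x, hxt, rfl⟩)

lemma le_Rsup {m : ℕ} {U : EuclideanSpace ℝ (Fin m) → ℝ}
    (hU : UpperSemicontinuous U) (α : ℝ) (r z' : EuclideanSpace ℝ (Fin m))
    {Z : EuclideanSpace ℝ (Fin m)} (hZ : Z ∈ closedBall z' 1) :
    U Z - ⟪r, Z - z'⟫ - ‖Z - z'‖ ^ 2 / (2 * α) ≤ Rsup U α z' r := by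
  have hc : Continuous (fun Z : EuclideanSpace ℝ (Fin m) =>
      -⟪r, Z - z'⟫ - ‖Z - z'‖ ^ 2 / (2 * α)) :=
    ((continuous_const.inner (continuous_id.sub continuous_const)).neg).sub
      ((((continuous_id.sub continuous_const).norm.pow 2)).div_const _)
  have husc : UpperSemicontinuous (fun Z : EuclideanSpace ℝ (Fin m) =>
      U Z - ⟪r, Z - z'⟫ - ‖Z - z'‖ ^ 2 / (2 * α)) := by
    have := hU.add hc.upperSemicontinuous
    convert this using 2 with Z
    case e'_4 => rfl
    case e'_5 => ring
  exact le_csSup (usc_bddAbove husc (isCompact_closedBall z' 1))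
    (Set.mem_image_of_mem _ hZ)

/-- if the supremum defining `R^α[U](z,r)` is attained at an interior
point `z̄` (with `‖z̄ − z‖ < 1`) then every superjet `(s,A)` of `R^α[U](·,r)` at `z`
satisfies `s = r + (z̄−z)/α` and `(s,A)` is a superjet of `U` at `z̄`. -/
theorem statement3 {m : ℕ} (U : EuclideanSpace ℝ (Fin m) → ℝ)
    (hU : UpperSemicontinuous U) (α : ℝ) (hα : 0 < α)
    (z r zm : EuclideanSpace ℝ (Fin m)) (hzm : ‖zm - z‖ < 1)
    (hatt : Rsup U α z r = U zm - ⟪r, zm - z⟫ - ‖zm - z‖ ^ 2 / (2 * α))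
    (s : EuclideanSpace ℝ (Fin m)) (A : Matrix (Fin m) (Fin m) ℝ) (hA : A.IsSymm)
    (hjet : IsSuperjet (fun z' => Rsup U α z' r) z s A) :
    s = r + (1 / α) • (zm - z) ∧ IsSuperjet U zm s A := by
  constructor
  · -- gradient identity
    set p : EuclideanSpace ℝ (Fin m) := r + (1 / α) • (zm - z) - s with hp
    have hkey : ∀ᶠ w in 𝓝 (0 : EuclideanSpace ℝ (Fin m)),
        ⟪p, w⟫ ≤ (1 / 2) * quadF A w + (1 + 1 / (2 * α)) * ‖w‖ ^ 2 := by
      have hball : ∀ᶠ w in 𝓝 (0 : EuclideanSpace ℝ (Fin m)), ‖w‖ < 1 - ‖zm - z‖ := by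
        have := Metric.ball_mem_nhds (0 : EuclideanSpace ℝ (Fin m)) (by linarith : (0:ℝ) < 1 - ‖zm - z‖)
        filter_upwards [this] with w hw
        simpa [dist_eq_norm] using hw
      filter_upwards [hjet 1 one_pos, hball] with w hw1 hw2
      have hmem : zm ∈ closedBall (z + w) 1 := by
        rw [mem_closedBall, dist_eq_norm]
        have : zm - (z + w) = (zm - z) - w := by abel
        rw [this]
        calc ‖zm - z - w‖ ≤ ‖zm - z‖ + ‖w‖ := norm_sub_le _ _
          _ ≤ 1 := by linarith
      have hlow := le_Rsup hU α r (z + w) hmem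
      have heq : zm - (z + w) = (zm - z) - w := by abel
      rw [heq] at hlow
      have hexp : ‖zm - z - w‖ ^ 2 = ‖zm - z‖ ^ 2 - 2 * ⟪zm - z, w⟫ + ‖w‖ ^ 2 :=
        norm_sub_sq_real _ _
      have hinner : ⟪r, zm - z - w⟫ = ⟪r, zm - z⟫ - ⟪r, w⟫ := inner_sub_right _ _ _
      have hpw : ⟪p, w⟫ = ⟪r, w⟫ + (1 / α) * ⟪zm - z, w⟫ - ⟪s, w⟫ := by
        rw [hp, inner_sub_left, inner_add_left, real_inner_smul_left]
      have hdiv : (‖zm - z‖ ^ 2 - 2 * ⟪zm - z, w⟫ + ‖w‖ ^ 2) / (2 * α)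
          = ‖zm - z‖ ^ 2 / (2 * α) - (1 / α) * ⟪zm - z, w⟫ + ‖w‖ ^ 2 / (2 * α) := by
        field_simp
      have hdiv2 : ‖w‖ ^ 2 / (2 * α) = (1 / (2 * α)) * ‖w‖ ^ 2 := by ring
      rw [hatt] at hw1
      rw [hinner, hexp, hdiv, hdiv2] at hlow
      rw [hpw]
      nlinarith [hlow, hw1]
    have hps : Tendsto (fun t : ℝ => t • p) (𝓝[>] (0:ℝ)) (𝓝 (0 : EuclideanSpace ℝ (Fin m))) := by
      have : Tendsto (fun t : ℝ => t • p) (𝓝 (0:ℝ)) (𝓝 ((0:ℝ) • p)) :=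
        (continuous_id.smul continuous_const).tendsto 0
      simpa using this.mono_left nhdsWithin_le_nhds
    have hev : ∀ᶠ t in 𝓝[>] (0:ℝ),
        ‖p‖ ^ 2 ≤ t * ((1 / 2) * quadF A p + (1 + 1 / (2 * α)) * ‖p‖ ^ 2) := by
      filter_upwards [hps.eventually hkey, self_mem_nhdsWithin] with t ht (htpos : 0 < t)
      have h1 : ⟪p, t • p⟫ = t * ‖p‖ ^ 2 := by
        rw [real_inner_smul_right, real_inner_self_eq_norm_sq]
      have h2 : quadF A (t • p) = t ^ 2 * quadF A p := by
        simp only [quadF, _root_.map_smul, real_inner_smul_left, real_inner_smul_right]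
        ring
      have h3 : ‖t • p‖ ^ 2 = t ^ 2 * ‖p‖ ^ 2 := by
        rw [norm_smul]
        simp [mul_pow, sq_abs]
      rw [h1, h2, h3] at ht
      nlinarith [ht, htpos]
    have hlim : Tendsto (fun t : ℝ => t * ((1 / 2) * quadF A p + (1 + 1 / (2 * α)) * ‖p‖ ^ 2))
        (𝓝[>] (0:ℝ)) (𝓝 0) := by
      have : Tendsto (fun t : ℝ => t * ((1 / 2) * quadF A p + (1 + 1 / (2 * α)) * ‖p‖ ^ 2))
          (𝓝 (0:ℝ)) (𝓝 (0 * ((1 / 2) * quadF A p + (1 + 1 / (2 * α)) * ‖p‖ ^ 2))) :=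
        (continuous_id.mul continuous_const).tendsto 0
      simpa using this.mono_left nhdsWithin_le_nhds
    have hp0 : ‖p‖ ^ 2 ≤ 0 := ge_of_tendsto hlim hev
    have : p = 0 := by
      have := le_antisymm hp0 (sq_nonneg _)
      have hn : ‖p‖ = 0 := by nlinarith [norm_nonneg p]
      exact norm_eq_zero.1 hn
    have := sub_eq_zero.1 this
    exact this.symm
  · -- superjet of U at zm
    intro ε hε
    filter_upwards [hjet ε hε] with h hh
    have hmem : zm + h ∈ closedBall (z + h) 1 := by
      rw [mem_closedBall, dist_eq_norm]
      have : zm + h - (z + h) = zm - z := by abel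
      rw [this]; linarith
    have hlow := le_Rsup hU α r (z + h) hmem
    have heq : zm + h - (z + h) = zm - z := by abel
    rw [heq] at hlow
    rw [hatt] at hh
    linarith [hlow, hh]
end

section
/- (First part of the nonlocal Jensen–Ishii Lemma.) Let u:ℝ^d→ℝ be upper semicontinuous and bounded, v:ℝ^d→ℝ lower semicontinuous and bounded, and φ:ℝ^d×ℝ^d→ℝ of class C². Assume (x̄,ȳ) is a zero global maximum point of (x,y) ↦ u(x)−v(y)−φ(x,y), i.e. u(x)−v(y) ≤ φ(x,y) for all x,y∈ℝ^d and u(x̄)−v(ȳ) = φ(x̄,ȳ). Set p := D_xφ(x̄,ȳ) and q := −D_yφ(x̄,ȳ). Then: (i) for every α>0 and all x,y∈ℝ^d, u(x) − v(y) ≤ R^α[u](x,p) − R_α[v](y,−q) ≤ R^α_⊗[φ]((x,y),(p,−q)); (ii) there exists ᾱ>0 such that for all 0<α≤ᾱ one has u(x̄) = R^α[u](x̄,p), v(ȳ) = R_α[v](ȳ,−q), and R^α_⊗[φ]((x̄,ȳ),(p,−q)) = φ(x̄,ȳ). -/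
open scoped RealInnerProductSpace
open Filter Metric MeasureTheory Topology

/-- Inf-convolution `R_α[V](z,r)`. -/
noncomputable def Rinf {m : ℕ} (V : EuclideanSpace ℝ (Fin m) → ℝ) (α : ℝ)
    (z r : EuclideanSpace ℝ (Fin m)) : ℝ :=
  sInf ((fun Z => V Z + ⟪r, Z - z⟫ + ‖Z - z‖ ^ 2 / (2 * α)) '' closedBall z 1)

/-- Sup-convolution `R^α_⊗[φ]((x,y),(a,b))` for functions of two variables. -/
noncomputable def RsupP {d : ℕ} (φ : EuclideanSpace ℝ (Fin d) → EuclideanSpace ℝ (Fin d) → ℝ)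
    (α : ℝ) (x y a b : EuclideanSpace ℝ (Fin d)) : ℝ :=
  sSup ((fun XY : EuclideanSpace ℝ (Fin d) × EuclideanSpace ℝ (Fin d) =>
      φ XY.1 XY.2 - ⟪a, XY.1 - x⟫ - ⟪b, XY.2 - y⟫ -
        (‖XY.1 - x‖ ^ 2 + ‖XY.2 - y‖ ^ 2) / (2 * α)) ''
    (closedBall x 1 ×ˢ closedBall y 1))


lemma taylor_bound {E : Type*} [NormedAddCommGroup E] [NormedSpace ℝ E] [ProperSpace E]
    (f : E → ℝ) (hf : ContDiff ℝ 2 f) (z : E) :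
    ∃ M > (0:ℝ), ∀ X ∈ Metric.closedBall z 1,
      f X - f z - fderiv ℝ f z (X - z) ≤ M * ‖X - z‖ ^ 2 := by
  have hf1 : ContDiff ℝ 1 (fderiv ℝ f) := hf.fderiv_right (by norm_num)
  have hcont : Continuous (fderiv ℝ (fderiv ℝ f)) := hf1.continuous_fderiv one_ne_zero
  obtain ⟨K, hK⟩ := (isCompact_closedBall z 1).exists_bound_of_continuousOn
    (f := fderiv ℝ (fderiv ℝ f)) hcont.continuousOn
  set K0 := max K 0 with hK0
  have hK0n : (0:ℝ) ≤ K0 := le_max_right _ _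
  refine ⟨K0 + 1, by positivity, ?_⟩
  intro X hX
  have hXz : ‖X - z‖ ≤ 1 := by rwa [← dist_eq_norm, ← Metric.mem_closedBall]
  have hr0 : (0:ℝ) ≤ ‖X - z‖ := norm_nonneg _
  have hLip : ∀ w ∈ Metric.closedBall z 1, ‖fderiv ℝ (fderiv ℝ f) w‖ ≤ K0 := fun w hw =>
    (hK w hw).trans (le_max_left _ _)
  have hdiff : ∀ w ∈ Metric.closedBall z 1, DifferentiableAt ℝ (fderiv ℝ f) w :=
    fun w _ => (hf1.differentiable one_ne_zero) w
  have hmvt : ∀ w ∈ Metric.closedBall z ‖X - z‖,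
      ‖fderiv ℝ f w - fderiv ℝ f z‖ ≤ K0 * ‖X - z‖ := by
    intro w hw
    have hw1 : w ∈ Metric.closedBall z 1 :=
      Metric.closedBall_subset_closedBall hXz hw
    have h1 := (convex_closedBall z 1).norm_image_sub_le_of_norm_fderiv_le
      hdiff hLip (Metric.mem_closedBall_self zero_le_one) hw1
    have h2 : ‖w - z‖ ≤ ‖X - z‖ := by rwa [← dist_eq_norm, ← Metric.mem_closedBall]
    nlinarith [norm_nonneg (w - z)]
  have hfin := (convex_closedBall z ‖X - z‖).norm_image_sub_le_of_norm_fderiv_le'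
    (fun w hw => (hf.differentiable (by norm_num)) w) hmvt
    (Metric.mem_closedBall_self hr0)
    (by rw [Metric.mem_closedBall, dist_eq_norm])
  have habs : f X - f z - fderiv ℝ f z (X - z) ≤ K0 * ‖X - z‖ * ‖X - z‖ :=
    le_trans (le_abs_self _) (by rwa [Real.norm_eq_abs] at hfin)
  nlinarith

lemma Rsup_bdd {m : ℕ} {U : EuclideanSpace ℝ (Fin m) → ℝ} {C : ℝ}
    (hU : ∀ x, |U x| ≤ C) {α : ℝ} (hα : 0 < α) (z r : EuclideanSpace ℝ (Fin m)) :
    BddAbove ((fun Z => U Z - ⟪r, Z - z⟫ - ‖Z - z‖ ^ 2 / (2 * α)) '' Metric.closedBall z 1) := by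
  refine ⟨C + ‖r‖, ?_⟩
  rintro t ⟨Z, hZ, rfl⟩
  have h2 : ‖Z - z‖ ≤ 1 := by rwa [← dist_eq_norm, ← Metric.mem_closedBall]
  have h3 := abs_le.1 (abs_real_inner_le_norm r (Z - z))
  have h4 : (0:ℝ) ≤ ‖Z - z‖ ^ 2 / (2 * α) := by positivity
  have h1 := abs_le.1 (hU Z)
  have h5 : ‖r‖ * ‖Z - z‖ ≤ ‖r‖ := by nlinarith [norm_nonneg r, norm_nonneg (Z - z)]
  dsimp only
  linarith

lemma Rinf_bdd {m : ℕ} {V : EuclideanSpace ℝ (Fin m) → ℝ} {C : ℝ}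
    (hV : ∀ x, |V x| ≤ C) {α : ℝ} (hα : 0 < α) (z r : EuclideanSpace ℝ (Fin m)) :
    BddBelow ((fun Z => V Z + ⟪r, Z - z⟫ + ‖Z - z‖ ^ 2 / (2 * α)) '' Metric.closedBall z 1) := by
  refine ⟨-(C + ‖r‖), ?_⟩
  rintro t ⟨Z, hZ, rfl⟩
  have h2 : ‖Z - z‖ ≤ 1 := by rwa [← dist_eq_norm, ← Metric.mem_closedBall]
  have h3 := abs_le.1 (abs_real_inner_le_norm r (Z - z))
  have h4 : (0:ℝ) ≤ ‖Z - z‖ ^ 2 / (2 * α) := by positivity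
  have h1 := abs_le.1 (hV Z)
  have h5 : ‖r‖ * ‖Z - z‖ ≤ ‖r‖ := by nlinarith [norm_nonneg r, norm_nonneg (Z - z)]
  dsimp only
  linarith

lemma Rsup_center_mem {m : ℕ} (U : EuclideanSpace ℝ (Fin m) → ℝ) (α : ℝ)
    (z r : EuclideanSpace ℝ (Fin m)) :
    U z ∈ ((fun Z => U Z - ⟪r, Z - z⟫ - ‖Z - z‖ ^ 2 / (2 * α)) '' Metric.closedBall z 1) :=
  ⟨z, Metric.mem_closedBall_self zero_le_one, by simp⟩

lemma Rinf_center_mem {m : ℕ} (V : EuclideanSpace ℝ (Fin m) → ℝ) (α : ℝ)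
    (z r : EuclideanSpace ℝ (Fin m)) :
    V z ∈ ((fun Z => V Z + ⟪r, Z - z⟫ + ‖Z - z‖ ^ 2 / (2 * α)) '' Metric.closedBall z 1) :=
  ⟨z, Metric.mem_closedBall_self zero_le_one, by simp⟩

lemma RsupP_set_bdd {d : ℕ} {φ : EuclideanSpace ℝ (Fin d) → EuclideanSpace ℝ (Fin d) → ℝ}
    (hφc : Continuous (Function.uncurry φ)) {α : ℝ} (hα : 0 < α)
    (x y a b : EuclideanSpace ℝ (Fin d)) :
    BddAbove ((fun XY : EuclideanSpace ℝ (Fin d) × EuclideanSpace ℝ (Fin d) =>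
      φ XY.1 XY.2 - ⟪a, XY.1 - x⟫ - ⟪b, XY.2 - y⟫ -
        (‖XY.1 - x‖ ^ 2 + ‖XY.2 - y‖ ^ 2) / (2 * α)) ''
      (Metric.closedBall x 1 ×ˢ Metric.closedBall y 1)) := by
  obtain ⟨Cφ, hCφ⟩ := ((isCompact_closedBall x 1).prod
    (isCompact_closedBall y 1)).exists_bound_of_continuousOn hφc.continuousOn
  refine ⟨Cφ + ‖a‖ + ‖b‖, ?_⟩
  rintro t ⟨⟨X, Y⟩, hXY, rfl⟩
  have hX : ‖X - x‖ ≤ 1 := by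
    have := hXY.1; rwa [Metric.mem_closedBall, dist_eq_norm] at this
  have hY : ‖Y - y‖ ≤ 1 := by
    have := hXY.2; rwa [Metric.mem_closedBall, dist_eq_norm] at this
  have h1 := hCφ (X, Y) hXY
  rw [Real.norm_eq_abs] at h1
  have h1' := abs_le.1 h1
  have h3 := abs_le.1 (abs_real_inner_le_norm a (X - x))
  have h3' := abs_le.1 (abs_real_inner_le_norm b (Y - y))
  have h4 : (0:ℝ) ≤ (‖X - x‖ ^ 2 + ‖Y - y‖ ^ 2) / (2 * α) := by positivity
  have h5 : ‖a‖ * ‖X - x‖ ≤ ‖a‖ := by nlinarith [norm_nonneg a, norm_nonneg (X - x)]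
  have h6 : ‖b‖ * ‖Y - y‖ ≤ ‖b‖ := by nlinarith [norm_nonneg b, norm_nonneg (Y - y)]
  have h7 : Function.uncurry φ (X, Y) = φ X Y := rfl
  dsimp only
  rw [h7] at h1'
  linarith [h1'.1, h1'.2]

lemma RsupP_center_mem {d : ℕ} (φ : EuclideanSpace ℝ (Fin d) → EuclideanSpace ℝ (Fin d) → ℝ)
    (α : ℝ) (x y a b : EuclideanSpace ℝ (Fin d)) :
    φ x y ∈ ((fun XY : EuclideanSpace ℝ (Fin d) × EuclideanSpace ℝ (Fin d) =>
      φ XY.1 XY.2 - ⟪a, XY.1 - x⟫ - ⟪b, XY.2 - y⟫ -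
        (‖XY.1 - x‖ ^ 2 + ‖XY.2 - y‖ ^ 2) / (2 * α)) ''
      (Metric.closedBall x 1 ×ˢ Metric.closedBall y 1)) :=
  ⟨(x, y), Set.mem_prod.2 ⟨Metric.mem_closedBall_self zero_le_one,
    Metric.mem_closedBall_self zero_le_one⟩, by simp⟩

/-- first part of the nonlocal Jensen-Ishii Lemma. -/
theorem statement5 {d : ℕ} (u v : EuclideanSpace ℝ (Fin d) → ℝ)
    (hu : UpperSemicontinuous u) (hub : ∃ C, ∀ x, |u x| ≤ C)
    (hv : LowerSemicontinuous v) (hvb : ∃ C, ∀ x, |v x| ≤ C)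
    (φ : EuclideanSpace ℝ (Fin d) → EuclideanSpace ℝ (Fin d) → ℝ)
    (hφ : ContDiff ℝ 2 (Function.uncurry φ))
    (xm ym : EuclideanSpace ℝ (Fin d))
    (hmax : ∀ x y, u x - v y ≤ φ x y)
    (heq : u xm - v ym = φ xm ym)
    (p q : EuclideanSpace ℝ (Fin d))
    (hp : p = gradient (fun x => φ x ym) xm)
    (hq : q = - gradient (fun y => φ xm y) ym) :
    (∀ α > (0:ℝ), ∀ x y,
        u x - v y ≤ Rsup u α x p - Rinf v α y (-q) ∧
        Rsup u α x p - Rinf v α y (-q) ≤ RsupP φ α x y p (-q)) ∧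
    (∃ ab > (0:ℝ), ∀ α : ℝ, 0 < α → α ≤ ab →
        u xm = Rsup u α xm p ∧
        v ym = Rinf v α ym (-q) ∧
        RsupP φ α xm ym p (-q) = φ xm ym) := by
  obtain ⟨Cu, hCu⟩ := hub
  obtain ⟨Cv, hCv⟩ := hvb
  have hφc : Continuous (Function.uncurry φ) := hφ.continuous
  constructor
  · intro α hα x y
    have h1 : u x ≤ Rsup u α x p := le_csSup (Rsup_bdd hCu hα x p) (Rsup_center_mem u α x p)
    have h2 : Rinf v α y (-q) ≤ v y := csInf_le (Rinf_bdd hCv hα y (-q)) (Rinf_center_mem v α y (-q))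
    refine ⟨by linarith, ?_⟩
    have hPbdd := RsupP_set_bdd hφc hα x y p (-q)
    rw [sub_le_iff_le_add, Rsup]
    apply csSup_le ⟨u x, Rsup_center_mem u α x p⟩
    rintro t ⟨X, hX, rfl⟩
    rw [← sub_le_iff_le_add']
    rw [Rinf]
    apply le_csInf ⟨v y, Rinf_center_mem v α y (-q)⟩
    rintro b ⟨Y, hY, rfl⟩
    dsimp only
    have hmem := le_csSup hPbdd (Set.mem_image_of_mem
      (fun XY : EuclideanSpace ℝ (Fin d) × EuclideanSpace ℝ (Fin d) =>
        φ XY.1 XY.2 - ⟪p, XY.1 - x⟫ - ⟪-q, XY.2 - y⟫ -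
          (‖XY.1 - x‖ ^ 2 + ‖XY.2 - y‖ ^ 2) / (2 * α))
      (Set.mem_prod.2 ⟨hX, hY⟩ : ((X, Y) : _) ∈ Metric.closedBall x 1 ×ˢ Metric.closedBall y 1))
    dsimp only at hmem
    have hdiv : (‖X - x‖ ^ 2 + ‖Y - y‖ ^ 2) / (2 * α)
        = ‖X - x‖ ^ 2 / (2 * α) + ‖Y - y‖ ^ 2 / (2 * α) := add_div _ _ _
    have hm := hmax X Y
    rw [RsupP]
    linarith
  · -- Part (ii)
    set F := Function.uncurry φ with hF
    obtain ⟨M, hM0, hMkey⟩ := taylor_bound F hφ (xm, ym)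
    have hFd : Differentiable ℝ F := hφ.differentiable (by norm_num)
    set L := fderiv ℝ F (xm, ym) with hL
    have hx1 : HasFDerivAt (fun x => φ x ym)
        (L.comp (ContinuousLinearMap.inl ℝ _ _)) xm :=
      by have h := (hFd (xm, ym)).hasFDerivAt.comp xm (hasFDerivAt_prodMk_left (𝕜 := ℝ) xm ym); exact h
    have hy1 : HasFDerivAt (fun y => φ xm y)
        (L.comp (ContinuousLinearMap.inr ℝ _ _)) ym :=
      by have h := (hFd (xm, ym)).hasFDerivAt.comp ym (hasFDerivAt_prodMk_right (𝕜 := ℝ) xm ym); exact h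
    have hpe : ∀ h, ⟪p, h⟫ = L (h, 0) := by
      intro h
      rw [hp, gradient, InnerProductSpace.toDual_symm_apply, hx1.fderiv]
      simp
    have hqe : ∀ k, ⟪-q, k⟫ = L (0, k) := by
      intro k
      rw [hq, neg_neg, gradient, InnerProductSpace.toDual_symm_apply, hy1.fderiv]
      simp
    have key : ∀ {α : ℝ}, 0 < α → α ≤ 1 / (2 * M) →
        ∀ X ∈ Metric.closedBall xm 1, ∀ Y ∈ Metric.closedBall ym 1,
        φ X Y - φ xm ym - ⟪p, X - xm⟫ - ⟪-q, Y - ym⟫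
          ≤ (‖X - xm‖ ^ 2 + ‖Y - ym‖ ^ 2) / (2 * α) := by
      intro α hα hαM X hX Y hY
      have hmem : ((X, Y) : EuclideanSpace ℝ (Fin d) × EuclideanSpace ℝ (Fin d))
          ∈ Metric.closedBall (xm, ym) 1 := by
        rw [← closedBall_prod_same]; exact Set.mem_prod.2 ⟨hX, hY⟩
      have h1 := hMkey (X, Y) hmem
      have hsub : ((X, Y) : EuclideanSpace ℝ (Fin d) × EuclideanSpace ℝ (Fin d)) - (xm, ym)
          = (X - xm, Y - ym) := rfl
      rw [hsub] at h1
      have h2 : L (X - xm, Y - ym) = ⟪p, X - xm⟫ + ⟪-q, Y - ym⟫ := by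
        rw [hpe, hqe, ← map_add]
        norm_num [Prod.mk_add_mk]
      have h3 : ‖((X - xm, Y - ym) : EuclideanSpace ℝ (Fin d) × EuclideanSpace ℝ (Fin d))‖ ^ 2
          ≤ ‖X - xm‖ ^ 2 + ‖Y - ym‖ ^ 2 := by
        rw [Prod.norm_def]
        rcases le_total ‖X - xm‖ ‖Y - ym‖ with h | h
        · rw [max_eq_right h]; nlinarith [norm_nonneg (X - xm)]
        · rw [max_eq_left h]; nlinarith [norm_nonneg (Y - ym)]
      have h4 : M ≤ 1 / (2 * α) := by
        rw [le_div_iff₀ (by linarith : (0:ℝ) < 2 * α)]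
        have := (le_div_iff₀ (by positivity : (0:ℝ) < 2 * M)).1 hαM
        nlinarith
      have h5 : F (X, Y) = φ X Y := rfl
      have h6 : F (xm, ym) = φ xm ym := rfl
      rw [h5, h6, h2] at h1
      have hsq : (0:ℝ) ≤ ‖X - xm‖ ^ 2 + ‖Y - ym‖ ^ 2 := by positivity
      have h7 : M * ‖((X - xm, Y - ym) : EuclideanSpace ℝ (Fin d) × EuclideanSpace ℝ (Fin d))‖ ^ 2
          ≤ M * (‖X - xm‖ ^ 2 + ‖Y - ym‖ ^ 2) :=
        mul_le_mul_of_nonneg_left h3 (le_of_lt hM0)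
      have h8 : M * (‖X - xm‖ ^ 2 + ‖Y - ym‖ ^ 2)
          ≤ (‖X - xm‖ ^ 2 + ‖Y - ym‖ ^ 2) / (2 * α) := by
        have := mul_le_mul_of_nonneg_right h4 hsq
        rwa [one_div_mul_eq_div] at this
      linarith
    refine ⟨1 / (2 * M), by positivity, ?_⟩
    intro α hα hab
    refine ⟨?_, ?_, ?_⟩
    · -- u xm = Rsup u α xm p
      refine le_antisymm (le_csSup (Rsup_bdd hCu hα xm p) (Rsup_center_mem u α xm p)) ?_
      rw [Rsup]
      apply csSup_le ⟨u xm, Rsup_center_mem u α xm p⟩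
      rintro t ⟨X, hX, rfl⟩
      have hk : φ X ym - φ xm ym - ⟪p, X - xm⟫ ≤ ‖X - xm‖ ^ 2 / (2 * α) := by
        simpa using key hα hab X hX ym (Metric.mem_closedBall_self zero_le_one)
      have hm := hmax X ym
      dsimp only
      linarith
    · -- v ym = Rinf v α ym (-q)
      refine le_antisymm ?_ (csInf_le (Rinf_bdd hCv hα ym (-q)) (Rinf_center_mem v α ym (-q)))
      rw [Rinf]
      apply le_csInf ⟨v ym, Rinf_center_mem v α ym (-q)⟩
      rintro b ⟨Y, hY, rfl⟩
      have hk : φ xm Y - φ xm ym - ⟪-q, Y - ym⟫ ≤ ‖Y - ym‖ ^ 2 / (2 * α) := by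
        simpa using key hα hab xm (Metric.mem_closedBall_self zero_le_one) Y hY
      have hm := hmax xm Y
      dsimp only
      linarith
    · -- RsupP φ α xm ym p (-q) = φ xm ym
      refine le_antisymm ?_ (le_csSup (RsupP_set_bdd hφc hα xm ym p (-q))
        (RsupP_center_mem φ α xm ym p (-q)))
      rw [RsupP]
      apply csSup_le ⟨φ xm ym, RsupP_center_mem φ α xm ym p (-q)⟩
      rintro t ⟨⟨X, Y⟩, hXY, rfl⟩
      have hk := key hα hab X hXY.1 Y hXY.2
      dsimp only
      linarith
end
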